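/- arXiv:2510.24593 — 3 statements merged into one kernel-verified Lean document; each statement's English description precedes it below -/
import Mathlib

section
/- For all integers d ≥ 2, n ≥ 3, m ≥ 0, and every fixed tangent vector h ∈ (ℝ^d)^n, the quantity g^m_v(h,h) is a rational function of the edge lengths |e_0(v)|, …, |e_{n-1}(v)|: there exist a real polynomial P in n variables X_0, …, X_{n-1} and a polynomial Q that is a finite product of factors, each of the form X_i, X_i + X_{i-1 (mod n)}, or X_0 + ⋯ + X_{n-1}, such that for every v ∈ ℝ_*^{d×n} one has Q(|e_0(v)|, …, |e_{n-1}(v)|) > 0 and g^m_v(h,h) = P(|e_0(v)|, …, |e_{n-1}(v)|) / Q(|e_0(v)|, …, |e_{n-1}(v)|). -/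
open scoped InnerProductSpace BigOperators
open MeasureTheory Filter Topology

noncomputable section

/-- Euclidean space ℝ^d. -/
abbrev Vec (d : ℕ) := EuclideanSpace ℝ (Fin d)

variable {d n : ℕ}

/-- Edges of the discrete closed curve: `e i (v) = v (i+1) - v i`. -/
def edge (v : ZMod n → Vec d) (i : ZMod n) : Vec d := v (i + 1) - v i

/-- Discrete regularity: adjacent vertices are distinct. -/
def IsReg (v : ZMod n → Vec d) : Prop := ∀ i, v i ≠ v (i + 1)

/-- Total length of the discrete curve. -/
def len [NeZero n] (v : ZMod n → Vec d) : ℝ := ∑ i, ‖edge v i‖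

/-- Discrete arc-length derivative of order `m`: odd orders use forward differences
divided by `|e_i|`, even (positive) orders use backward differences divided by the
averaged edge length. -/
def Ds (v h : ZMod n → Vec d) : ℕ → ZMod n → Vec d
  | 0 => h
  | (m + 1) => fun i =>
    if (m + 1) % 2 = 1 then
      (‖edge v i‖)⁻¹ • (Ds v h m (i + 1) - Ds v h m i)
    else
      ((‖edge v i‖ + ‖edge v (i - 1)‖) / 2)⁻¹ • (Ds v h m i - Ds v h m (i - 1))

/-- The weights μ_i in the higher-order term. -/
def mu (v : ZMod n → Vec d) (m : ℕ) (i : ZMod n) : ℝ :=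
  if m % 2 = 1 then ‖edge v i‖ else (‖edge v i‖ + ‖edge v (i - 1)‖) / 2

/-- The discrete Sobolev-type metric of order `m`. -/
def gMet [NeZero n] (m : ℕ) (v h k : ZMod n → Vec d) : ℝ :=
  ∑ i, (⟪h i, k i⟫_ℝ / len v ^ 3 * ((‖edge v i‖ + ‖edge v (i - 1)‖) / 2)
    + ⟪Ds v h m i, Ds v k m i⟫_ℝ / len v ^ ((3 : ℤ) - 2 * (m : ℤ)) * mu v m i)

namespace GoodAux

open MvPolynomial

def IsAtom (n : ℕ) [NeZero n] (p : MvPolynomial (ZMod n) ℝ) : Prop :=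
  (∃ i, p = X i) ∨ (∃ i, p = X i + X (i - 1)) ∨ p = ∑ i, X i

def AtomProd (n : ℕ) [NeZero n] (Q : MvPolynomial (ZMod n) ℝ) : Prop :=
  ∃ (k : ℕ) (F : Fin k → MvPolynomial (ZMod n) ℝ),
    Q = ∏ j, F j ∧ ∀ j, IsAtom n (F j)

def Good (n d : ℕ) [NeZero n] (f : (ZMod n → Vec d) → ℝ) : Prop :=
  ∃ P Q, AtomProd n Q ∧ ∀ v : ZMod n → Vec d, IsReg v →
    0 < eval (fun i => ‖edge v i‖) Q ∧
    f v = eval (fun i => ‖edge v i‖) P / eval (fun i => ‖edge v i‖) Q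

variable [NeZero n]

lemma edge_norm_pos {v : ZMod n → Vec d} (hv : IsReg v) (i : ZMod n) :
    0 < ‖edge v i‖ := by
  rw [norm_pos_iff]
  exact sub_ne_zero.mpr (fun e => hv i e.symm)

lemma eval_atom_pos {p : MvPolynomial (ZMod n) ℝ} (hp : IsAtom n p)
    {v : ZMod n → Vec d} (hv : IsReg v) :
    0 < eval (fun i => ‖edge v i‖) p := by
  rcases hp with ⟨i, rfl⟩ | ⟨i, rfl⟩ | rfl
  · simpa using edge_norm_pos hv i
  · simp only [map_add, eval_X]
    exact add_pos (edge_norm_pos hv i) (edge_norm_pos hv _)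
  · rw [map_sum]
    refine Finset.sum_pos (fun i _ => by simpa using edge_norm_pos hv i)
      Finset.univ_nonempty

lemma atomProd_one : AtomProd n (1 : MvPolynomial (ZMod n) ℝ) :=
  ⟨0, Fin.elim0, by simp, fun j => j.elim0⟩

lemma atomProd_atom {p : MvPolynomial (ZMod n) ℝ} (hp : IsAtom n p) :
    AtomProd n p :=
  ⟨1, fun _ => p, by simp, fun _ => hp⟩

lemma atomProd_mul {p q : MvPolynomial (ZMod n) ℝ}
    (hp : AtomProd n p) (hq : AtomProd n q) : AtomProd n (p * q) := by
  obtain ⟨k1, F1, rfl, h1⟩ := hp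
  obtain ⟨k2, F2, rfl, h2⟩ := hq
  refine ⟨k1 + k2, Fin.append F1 F2, ?_, ?_⟩
  · rw [Fin.prod_univ_add]
    simp [Fin.append_left, Fin.append_right]
  · intro j
    rcases lt_or_ge (j : ℕ) k1 with hj | hj
    · have e : j = Fin.castAdd k2 ⟨j, hj⟩ := by ext; rfl
      rw [e, Fin.append_left]; exact h1 _
    · have e : j = Fin.natAdd k1 ⟨(j : ℕ) - k1, by omega⟩ := by
        ext; simp; omega
      rw [e, Fin.append_right]; exact h2 _

lemma good_const (c : ℝ) : Good n d (fun _ => c) :=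
  ⟨C c, 1, atomProd_one, fun v _ => by simp⟩

lemma good_add {f g : (ZMod n → Vec d) → ℝ} (hf : Good n d f) (hg : Good n d g) :
    Good n d (fun v => f v + g v) := by
  obtain ⟨P1, Q1, hQ1, h1⟩ := hf
  obtain ⟨P2, Q2, hQ2, h2⟩ := hg
  refine ⟨P1 * Q2 + P2 * Q1, Q1 * Q2, atomProd_mul hQ1 hQ2, fun v hv => ?_⟩
  obtain ⟨q1, e1⟩ := h1 v hv
  obtain ⟨q2, e2⟩ := h2 v hv
  dsimp only
  rw [e1, e2]
  constructor
  · rw [map_mul]; exact mul_pos q1 q2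
  · rw [map_mul, map_add, map_mul, map_mul]
    field_simp

lemma good_mul {f g : (ZMod n → Vec d) → ℝ} (hf : Good n d f) (hg : Good n d g) :
    Good n d (fun v => f v * g v) := by
  obtain ⟨P1, Q1, hQ1, h1⟩ := hf
  obtain ⟨P2, Q2, hQ2, h2⟩ := hg
  refine ⟨P1 * P2, Q1 * Q2, atomProd_mul hQ1 hQ2, fun v hv => ?_⟩
  obtain ⟨q1, e1⟩ := h1 v hv
  obtain ⟨q2, e2⟩ := h2 v hv
  dsimp only
  rw [e1, e2, map_mul, map_mul]
  exact ⟨mul_pos q1 q2, div_mul_div_comm _ _ _ _⟩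

lemma good_neg {f : (ZMod n → Vec d) → ℝ} (hf : Good n d f) :
    Good n d (fun v => -f v) := by
  have := good_mul (good_const (n := n) (d := d) (-1)) hf
  simpa using this

lemma good_sub {f g : (ZMod n → Vec d) → ℝ} (hf : Good n d f) (hg : Good n d g) :
    Good n d (fun v => f v - g v) := by
  have := good_add hf (good_neg hg)
  simpa [sub_eq_add_neg] using this

lemma good_of_eq {f g : (ZMod n → Vec d) → ℝ} (hf : Good n d f)
    (hfg : ∀ v, IsReg v → f v = g v) : Good n d g := by
  obtain ⟨P, Q, hQ, hPQ⟩ := hf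
  exact ⟨P, Q, hQ, fun v hv => ⟨(hPQ v hv).1, (hfg v hv) ▸ (hPQ v hv).2⟩⟩

lemma good_sum {ι : Type*} (s : Finset ι) (f : ι → (ZMod n → Vec d) → ℝ)
    (hf : ∀ i ∈ s, Good n d (f i)) :
    Good n d (fun v => ∑ i ∈ s, f i v) := by
  induction s using Finset.cons_induction with
  | empty => exact good_of_eq (good_const 0) (fun v _ => by simp)
  | cons a s ha ih =>
    have := good_add (hf a (Finset.mem_cons_self a s))
      (ih (fun i hi => hf i (Finset.mem_cons_of_mem hi)))
    exact good_of_eq this (fun v _ => by rw [Finset.sum_cons])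

lemma good_pow {f : (ZMod n → Vec d) → ℝ} (hf : Good n d f) (k : ℕ) :
    Good n d (fun v => f v ^ k) := by
  induction k with
  | zero => exact good_of_eq (good_const 1) (fun v _ => by simp)
  | succ k ih =>
    exact good_of_eq (good_mul ih hf) (fun v _ => by rw [← pow_succ])

lemma good_edge (i : ZMod n) : Good n d (fun v => ‖edge v i‖) :=
  ⟨X i, 1, atomProd_one, fun v _ => by simp⟩

lemma good_inv_edge (i : ZMod n) : Good n d (fun v => (‖edge v i‖)⁻¹) :=
  ⟨1, X i, atomProd_atom (Or.inl ⟨i, rfl⟩), fun v hv => by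
    simp [one_div, edge_norm_pos hv i]⟩

lemma good_pairsum (i : ZMod n) :
    Good n d (fun v => ‖edge v i‖ + ‖edge v (i - 1)‖) :=
  ⟨X i + X (i - 1), 1, atomProd_one, fun v _ => by simp⟩

lemma good_inv_pairsum (i : ZMod n) :
    Good n d (fun v => (‖edge v i‖ + ‖edge v (i - 1)‖)⁻¹) :=
  ⟨1, X i + X (i - 1), atomProd_atom (Or.inr (Or.inl ⟨i, rfl⟩)), fun v hv => by
    constructor
    · exact eval_atom_pos (Or.inr (Or.inl ⟨i, rfl⟩)) hv
    · simp [one_div]⟩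

lemma good_len : Good n d (fun v => len v) :=
  ⟨∑ i, X i, 1, atomProd_one, fun v _ => by
    simp [len, map_sum]⟩

lemma good_inv_len : Good n d (fun v => (len v)⁻¹) :=
  ⟨1, ∑ i, X i, atomProd_atom (Or.inr (Or.inr rfl)), fun v hv => by
    constructor
    · exact eval_atom_pos (Or.inr (Or.inr rfl)) hv
    · simp [len, map_sum, one_div]⟩

lemma good_zpow_len (z : ℤ) : Good n d (fun v => len v ^ z) := by
  rcases z with k | k
  · exact good_of_eq (good_pow good_len k) (fun v _ => by
      rw [Int.ofNat_eq_coe, zpow_natCast])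
  · refine good_of_eq (good_pow good_inv_len (k + 1)) (fun v _ => ?_)
    rw [zpow_negSucc, ← inv_pow]





lemma ds_coeff (h : ZMod n → Vec d) (m : ℕ) :
    ∀ i : ZMod n, ∃ c : ZMod n → ((ZMod n → Vec d) → ℝ),
      (∀ j, Good n d (c j)) ∧
      ∀ v : ZMod n → Vec d, IsReg v → Ds v h m i = ∑ j, c j v • h j := by
  induction m with
  | zero =>
    intro i
    refine ⟨fun j _ => if j = i then 1 else 0, fun j => good_const _, fun v _ => ?_⟩
    simp [Ds, ite_smul, Finset.sum_ite_eq']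
  | succ m ih =>
    intro i
    by_cases hp : (m + 1) % 2 = 1
    · obtain ⟨c1, hc1, e1⟩ := ih (i + 1)
      obtain ⟨c2, hc2, e2⟩ := ih i
      refine ⟨fun j v => (‖edge v i‖)⁻¹ * (c1 j v - c2 j v),
        fun j => good_mul (good_inv_edge i) (good_sub (hc1 j) (hc2 j)),
        fun v hv => ?_⟩
      have : Ds v h (m + 1) i = (‖edge v i‖)⁻¹ • (Ds v h m (i + 1) - Ds v h m i) := by
        simp [Ds, hp]
      rw [this, e1 v hv, e2 v hv, ← Finset.sum_sub_distrib, Finset.smul_sum]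
      refine Finset.sum_congr rfl fun j _ => ?_
      rw [← sub_smul, smul_smul]
    · obtain ⟨c1, hc1, e1⟩ := ih i
      obtain ⟨c2, hc2, e2⟩ := ih (i - 1)
      refine ⟨fun j v => (2 * (‖edge v i‖ + ‖edge v (i - 1)‖)⁻¹) * (c1 j v - c2 j v),
        fun j => good_mul (good_mul (good_const 2) (good_inv_pairsum i))
          (good_sub (hc1 j) (hc2 j)),
        fun v hv => ?_⟩
      have hstep : Ds v h (m + 1) i
          = ((‖edge v i‖ + ‖edge v (i - 1)‖) / 2)⁻¹ • (Ds v h m i - Ds v h m (i - 1)) := by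
        simp [Ds, hp]
      have hinv : ((‖edge v i‖ + ‖edge v (i - 1)‖) / 2)⁻¹
          = 2 * (‖edge v i‖ + ‖edge v (i - 1)‖)⁻¹ := by
        rw [div_eq_mul_inv, mul_inv, inv_inv, mul_comm]
      rw [hstep, hinv, e1 v hv, e2 v hv, ← Finset.sum_sub_distrib, Finset.smul_sum]
      refine Finset.sum_congr rfl fun j _ => ?_
      rw [← sub_smul, smul_smul]

lemma good_inner_ds (h : ZMod n → Vec d) (m : ℕ) (i : ZMod n) :
    Good n d (fun v => ⟪Ds v h m i, Ds v h m i⟫_ℝ) := by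
  obtain ⟨c, hc, hEq⟩ := ds_coeff h m i
  have hg : Good n d (fun v => ∑ j, ∑ j', (c j v * c j' v) * ⟪h j, h j'⟫_ℝ) := by
    refine good_sum _ _ fun j _ => good_sum _ _ fun j' _ => ?_
    exact good_mul (good_mul (hc j) (hc j')) (good_const _)
  refine good_of_eq hg fun v hv => ?_
  rw [hEq v hv, sum_inner]
  refine Finset.sum_congr rfl fun j _ => ?_
  rw [inner_sum]
  refine Finset.sum_congr rfl fun j' _ => ?_
  rw [real_inner_smul_left, real_inner_smul_right]
  ring

lemma good_gMet (h : ZMod n → Vec d) (m : ℕ) :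
    Good n d (fun v => gMet m v h h) := by
  refine good_of_eq (f := fun v => ∑ i,
      (⟪h i, h i⟫_ℝ / len v ^ 3 * ((‖edge v i‖ + ‖edge v (i - 1)‖) / 2)
        + ⟪Ds v h m i, Ds v h m i⟫_ℝ / len v ^ ((3 : ℤ) - 2 * (m : ℤ)) * mu v m i))
    ?_ (fun v _ => rfl)
  refine good_sum _ _ fun i _ => good_add ?_ ?_
  · have g1 : Good n d (fun v => ⟪h i, h i⟫_ℝ * ((len v)⁻¹) ^ 3
        * ((1 / 2) * (‖edge v i‖ + ‖edge v (i - 1)‖))) :=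
      good_mul (good_mul (good_const _) (good_pow good_inv_len 3))
        (good_mul (good_const _) (good_pairsum i))
    refine good_of_eq g1 fun v _ => ?_
    rw [div_eq_mul_inv, inv_pow]
    ring
  · have g2 : Good n d (fun v => ⟪Ds v h m i, Ds v h m i⟫_ℝ
        * len v ^ (-((3 : ℤ) - 2 * (m : ℤ))) * mu v m i) :=
      good_mul (good_mul (good_inner_ds h m i) (good_zpow_len _)) ?_
    · refine good_of_eq g2 fun v _ => ?_
      rw [div_eq_mul_inv, ← zpow_neg]
    · unfold mu
      by_cases hm : m % 2 = 1
      · simp only [hm, if_true]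
        exact good_edge i
      · simp only [hm, if_false]
        exact good_of_eq (good_mul (good_const (1/2 : ℝ)) (good_pairsum i))
          (fun v _ => by ring)


end GoodAux


/-- Lemma 2.1: for fixed `h`, `g^m_v(h,h)` is a rational function of the
edge lengths, whose denominator is a finite product of factors of the form `X i`,
`X i + X (i-1)`, or `X 0 + ⋯ + X (n-1)`, positive on the regular set. -/
theorem gMet_rational (d n m : ℕ) (hd : 2 ≤ d) (hn : 3 ≤ n) [NeZero n]
    (h : ZMod n → Vec d) :
    ∃ (P Q : MvPolynomial (ZMod n) ℝ) (k : ℕ) (F : Fin k → MvPolynomial (ZMod n) ℝ),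
      Q = ∏ j, F j ∧
      (∀ j, (∃ i, F j = MvPolynomial.X i) ∨
            (∃ i, F j = MvPolynomial.X i + MvPolynomial.X (i - 1)) ∨
            F j = ∑ i, MvPolynomial.X i) ∧
      ∀ v : ZMod n → Vec d, IsReg v →
        0 < MvPolynomial.eval (fun i => ‖edge v i‖) Q ∧
        gMet m v h h = MvPolynomial.eval (fun i => ‖edge v i‖) P /
          MvPolynomial.eval (fun i => ‖edge v i‖) Q := by
  obtain ⟨P, Q, ⟨k, F, hQF, hF⟩, hPQ⟩ := GoodAux.good_gMet h m
  exact ⟨P, Q, k, F, hQF, hF, hPQ⟩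
end
end

section
/- For all integers d ≥ 2, n ≥ 3, m ≥ 0, every fixed h ∈ (ℝ^d)^n, and every index i ∈ ℤ/nℤ, the quantity ⟨D_s^m h_i, D_s^m h_i⟩ is a rational function of the edge lengths whose denominator in reduced form only has factors of the form |e_j(v)| and |e_j(v)| + |e_{j-1}(v)|: there exist a real polynomial P in n variables X_0, …, X_{n-1} and a polynomial Q that is a finite product of factors, each of the form X_j or X_j + X_{j-1 (mod n)}, such that for every v ∈ ℝ_*^{d×n} one has Q(|e_0(v)|, …, |e_{n-1}(v)|) > 0 and ⟨D_s^m h_i, D_s^m h_i⟩ = P(|e_0(v)|, …, |e_{n-1}(v)|) / Q(|e_0(v)|, …, |e_{n-1}(v)|). -/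
open scoped InnerProductSpace BigOperators
open MeasureTheory Filter Topology

noncomputable section

variable {d n : ℕ}

/-!
Each step of `Ds` takes a difference of neighbouring values and divides it by `‖eᵢ‖` or by
`(‖eᵢ‖ + ‖eᵢ₋₁‖) / 2`. Expanding bilinearly, `⟪D^{m+1} h_i, D^{m+1} h_j⟫` is therefore a signed sum
of four inner products of order `m`, multiplied by the inverses of two admissible factors
(`X a` or `X a + X (a - 1)`, evaluated at the edge lengths). Quotients of a polynomial in the
edge lengths by a product of admissible factors include the constants and the inverses of
admissible factors and are closed under sums and products, so induction on `m`, simultaneously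
over all pairs `(i, j)`, proves the claim.
-/

open MvPolynomial

section EdgeRational

variable {d n : ℕ}

def edgeLengths (v : ZMod n → Vec d) : ZMod n → ℝ := fun a => ‖edge v a‖

lemma norm_edge_pos {v : ZMod n → Vec d} (hv : IsReg v) (a : ZMod n) : 0 < ‖edge v a‖ :=
  norm_pos_iff.mpr (sub_ne_zero.mpr (hv a).symm)

def IsEdgeFactor (q : MvPolynomial (ZMod n) ℝ) : Prop :=
  (∃ a, q = X a) ∨ (∃ a, q = X a + X (a - 1))

lemma IsEdgeFactor.eval_pos {q : MvPolynomial (ZMod n) ℝ} (hq : IsEdgeFactor q)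
    {v : ZMod n → Vec d} (hv : IsReg v) : 0 < eval (edgeLengths v) q := by
  rcases hq with ⟨a, rfl⟩ | ⟨a, rfl⟩
  · simpa only [eval_X, edgeLengths] using norm_edge_pos hv a
  · simpa only [map_add, eval_X, edgeLengths] using add_pos (norm_edge_pos hv a) (norm_edge_pos hv (a - 1))

lemma eval_prod_pos_of_isEdgeFactor {L : List (MvPolynomial (ZMod n) ℝ)}
    (hL : ∀ q ∈ L, IsEdgeFactor q) {v : ZMod n → Vec d} (hv : IsReg v) :
    0 < eval (edgeLengths v) L.prod := by
  rw [map_list_prod]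
  refine List.prod_pos fun x hx => ?_
  obtain ⟨q, hq, rfl⟩ := List.mem_map.mp hx
  exact (hL q hq).eval_pos hv

def IsEdgeRational (f : (ZMod n → Vec d) → ℝ) : Prop :=
  ∃ (P : MvPolynomial (ZMod n) ℝ) (L : List (MvPolynomial (ZMod n) ℝ)),
    (∀ q ∈ L, IsEdgeFactor q) ∧
    ∀ v, IsReg v → f v = eval (edgeLengths v) P / eval (edgeLengths v) L.prod

namespace IsEdgeRational

lemma const (c : ℝ) : IsEdgeRational (d := d) (n := n) fun _ => c :=
  ⟨C c, [], by simp, fun v _ => by simp⟩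

lemma add {f g : (ZMod n → Vec d) → ℝ} (hf : IsEdgeRational f) (hg : IsEdgeRational g) :
    IsEdgeRational fun v => f v + g v := by
  obtain ⟨P₁, L₁, hL₁, hf⟩ := hf
  obtain ⟨P₂, L₂, hL₂, hg⟩ := hg
  refine ⟨P₁ * L₂.prod + P₂ * L₁.prod, L₁ ++ L₂, ?_, fun v hv => ?_⟩
  · simpa only [List.mem_append, or_imp, forall_and] using ⟨hL₁, hL₂⟩
  · show f v + g v = _
    rw [hf v hv, hg v hv, div_add_div _ _ (eval_prod_pos_of_isEdgeFactor hL₁ hv).ne'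
      (eval_prod_pos_of_isEdgeFactor hL₂ hv).ne', List.prod_append]
    simp only [map_add, map_mul]
    ring

lemma mul {f g : (ZMod n → Vec d) → ℝ} (hf : IsEdgeRational f) (hg : IsEdgeRational g) :
    IsEdgeRational fun v => f v * g v := by
  obtain ⟨P₁, L₁, hL₁, hf⟩ := hf
  obtain ⟨P₂, L₂, hL₂, hg⟩ := hg
  refine ⟨P₁ * P₂, L₁ ++ L₂, ?_, fun v hv => ?_⟩
  · simpa only [List.mem_append, or_imp, forall_and] using ⟨hL₁, hL₂⟩
  · show f v * g v = _
    rw [hf v hv, hg v hv, List.prod_append, map_mul, map_mul, div_mul_div_comm]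

lemma sub {f g : (ZMod n → Vec d) → ℝ} (hf : IsEdgeRational f) (hg : IsEdgeRational g) :
    IsEdgeRational fun v => f v - g v := by
  simpa only [sub_eq_add_neg, neg_one_mul] using hf.add ((const (-1)).mul hg)

lemma inv_eval_of_isEdgeFactor {q : MvPolynomial (ZMod n) ℝ} (hq : IsEdgeFactor q) :
    IsEdgeRational (d := d) fun v => (eval (edgeLengths v) q)⁻¹ :=
  ⟨1, [q], by simpa using hq, fun v _ => by simp⟩

lemma inv_norm_edge (a : ZMod n) : IsEdgeRational (d := d) fun v => ‖edge v a‖⁻¹ := by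
  simpa only [eval_X, edgeLengths] using inv_eval_of_isEdgeFactor (d := d) (Or.inl ⟨a, rfl⟩)

lemma inv_norm_edge_add_norm_edge_sub_one (a : ZMod n) :
    IsEdgeRational (d := d) fun v => (‖edge v a‖ + ‖edge v (a - 1)‖)⁻¹ := by
  simpa only [map_add, eval_X, edgeLengths] using inv_eval_of_isEdgeFactor (d := d) (Or.inr ⟨a, rfl⟩)

end IsEdgeRational

end EdgeRational

section InnerDs

variable {d n : ℕ} (v h : ZMod n → Vec d) (m : ℕ) (i j : ZMod n)

lemma inner_Ds_succ_of_odd (hm : (m + 1) % 2 = 1) :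
    ⟪Ds v h (m + 1) i, Ds v h (m + 1) j⟫_ℝ =
      ‖edge v i‖⁻¹ * ‖edge v j‖⁻¹ *
        (⟪Ds v h m (i + 1), Ds v h m (j + 1)⟫_ℝ - ⟪Ds v h m (i + 1), Ds v h m j⟫_ℝ -
          (⟪Ds v h m i, Ds v h m (j + 1)⟫_ℝ - ⟪Ds v h m i, Ds v h m j⟫_ℝ)) := by
  simp only [Ds, hm, if_true, real_inner_smul_left, real_inner_smul_right, inner_sub_left,
    inner_sub_right]
  ring

lemma inner_Ds_succ_of_even (hm : ¬(m + 1) % 2 = 1) :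
    ⟪Ds v h (m + 1) i, Ds v h (m + 1) j⟫_ℝ =
      4 * (‖edge v i‖ + ‖edge v (i - 1)‖)⁻¹ * (‖edge v j‖ + ‖edge v (j - 1)‖)⁻¹ *
        (⟪Ds v h m i, Ds v h m j⟫_ℝ - ⟪Ds v h m i, Ds v h m (j - 1)⟫_ℝ -
          (⟪Ds v h m (i - 1), Ds v h m j⟫_ℝ - ⟪Ds v h m (i - 1), Ds v h m (j - 1)⟫_ℝ)) := by
  simp only [Ds, hm, if_false, real_inner_smul_left, real_inner_smul_right, inner_sub_left,
    inner_sub_right, inv_div]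
  ring

end InnerDs

open IsEdgeRational in
lemma isEdgeRational_inner_Ds {d n : ℕ} (h : ZMod n → Vec d) (m : ℕ) (i j : ZMod n) :
    IsEdgeRational fun v => ⟪Ds v h m i, Ds v h m j⟫_ℝ := by
  induction m generalizing i j with
  | zero => exact const ⟪h i, h j⟫_ℝ
  | succ m ih =>
    by_cases hm : (m + 1) % 2 = 1
    · simp only [inner_Ds_succ_of_odd _ _ _ _ _ hm]
      exact ((inv_norm_edge i).mul (inv_norm_edge j)).mul
        (((ih _ _).sub (ih _ _)).sub ((ih _ _).sub (ih _ _)))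
    · simp only [inner_Ds_succ_of_even _ _ _ _ _ hm]
      exact (((const 4).mul (inv_norm_edge_add_norm_edge_sub_one i)).mul
        (inv_norm_edge_add_norm_edge_sub_one j)).mul
        (((ih _ _).sub (ih _ _)).sub ((ih _ _).sub (ih _ _)))

theorem Ds_inner_rational_general (d n m : ℕ)
    (h : ZMod n → Vec d) (i : ZMod n) :
    ∃ (P Q : MvPolynomial (ZMod n) ℝ) (k : ℕ) (F : Fin k → MvPolynomial (ZMod n) ℝ),
      Q = ∏ j, F j ∧
      (∀ j, (∃ a, F j = MvPolynomial.X a) ∨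
            (∃ a, F j = MvPolynomial.X a + MvPolynomial.X (a - 1))) ∧
      ∀ v : ZMod n → Vec d, IsReg v →
        0 < MvPolynomial.eval (fun a => ‖edge v a‖) Q ∧
        ⟪Ds v h m i, Ds v h m i⟫_ℝ = MvPolynomial.eval (fun a => ‖edge v a‖) P /
          MvPolynomial.eval (fun a => ‖edge v a‖) Q := by
  obtain ⟨P, L, hL, hP⟩ := isEdgeRational_inner_Ds h m i i
  refine ⟨P, L.prod, L.length, fun j => L[j], (Fin.prod_univ_getElem L).symm,
    fun j => hL _ (List.getElem_mem _), fun v hv => ⟨?_, hP v hv⟩⟩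
  exact eval_prod_pos_of_isEdgeFactor hL hv

/-- for fixed `h` and each index `i`, `⟨D_s^m h_i, D_s^m h_i⟩` is a
rational function of the edge lengths whose denominator is a finite product of factors
of the form `X j` or `X j + X (j-1)`, positive on the regular set. -/
theorem Ds_inner_rational (d n m : ℕ) (hd : 2 ≤ d) (hn : 3 ≤ n) [NeZero n]
    (h : ZMod n → Vec d) (i : ZMod n) :
    ∃ (P Q : MvPolynomial (ZMod n) ℝ) (k : ℕ) (F : Fin k → MvPolynomial (ZMod n) ℝ),
      Q = ∏ j, F j ∧
      (∀ j, (∃ a, F j = MvPolynomial.X a) ∨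
            (∃ a, F j = MvPolynomial.X a + MvPolynomial.X (a - 1))) ∧
      ∀ v : ZMod n → Vec d, IsReg v →
        0 < MvPolynomial.eval (fun a => ‖edge v a‖) Q ∧
        ⟪Ds v h m i, Ds v h m i⟫_ℝ = MvPolynomial.eval (fun a => ‖edge v a‖) P /
          MvPolynomial.eval (fun a => ‖edge v a‖) Q :=
  Ds_inner_rational_general d n m h i
end
end

section
/- Conformal factor of order 1 for the triangle space: for every v ∈ ℝ² \ {(1,0), (−1,0)} and every h ∈ ℝ², setting w = ((1,0), v, (−1,0)) ∈ ℝ_*^{2×3} and k = (0, h, 0) ∈ (ℝ²)^3, one has g^1_w(k, k) = f_1(v) · |h|², where f_1(v) = (|e_0(v)| + |e_1(v)|) / (2 l(v)³) + (1/|e_0(v)| + 1/|e_1(v)|) / l(v), with e_0(v) = v − (1,0), e_1(v) = (−1,0) − v, and l(v) = |e_0(v)| + |e_1(v)| + 2. -/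
open scoped InnerProductSpace BigOperators
open MeasureTheory Filter Topology

noncomputable section

variable {d n : ℕ}

/-- The point (1,0) ∈ ℝ². -/
def p₁ : Vec 2 := (WithLp.equiv 2 (Fin 2 → ℝ)).symm ![1, 0]

/-- The point (-1,0) ∈ ℝ². -/
def p₂ : Vec 2 := (WithLp.equiv 2 (Fin 2 → ℝ)).symm ![-1, 0]

/-- The triangle with vertices (1,0), v, (-1,0), as a discrete curve with 3 points. -/
def tri (v : Vec 2) : ZMod 3 → Vec 2 := fun i => if i = 0 then p₁ else if i = 1 then v else p₂

/-- The tangent vector (0, h, 0) to the space of triangles with two fixed vertices. -/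
def triTan (h : Vec 2) : ZMod 3 → Vec 2 := fun i => if i = 1 then h else 0

lemma sum_zmod3 (f : ZMod 3 → ℝ) : ∑ i, f i = f 0 + f 1 + f 2 := Fin.sum_univ_three f

lemma norm_p₁_sub_p₂ : ‖p₁ - p₂‖ = 2 := by
  rw [EuclideanSpace.norm_eq]
  simp [p₁, p₂, Fin.sum_univ_two]
  norm_num

/-- the restriction of `g¹` to the space of triangles modulo rotation,
translation and scaling is conformal to the Euclidean metric, with conformal factor
`f₁(v) = (|e₀(v)| + |e₁(v)|) / (2 l(v)³) + (1/|e₀(v)| + 1/|e₁(v)|) / l(v)`. -/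
theorem conformal_factor_order_one (v : Vec 2) (hv₁ : v ≠ p₁) (hv₂ : v ≠ p₂)
    (h : Vec 2) :
    gMet 1 (tri v) (triTan h) (triTan h) =
      ((‖v - p₁‖ + ‖p₂ - v‖) / (2 * (‖v - p₁‖ + ‖p₂ - v‖ + 2) ^ 3)
        + (1 / ‖v - p₁‖ + 1 / ‖p₂ - v‖) / (‖v - p₁‖ + ‖p₂ - v‖ + 2)) * ‖h‖ ^ 2 := by
  have i01 : ((0 : ZMod 3) + 1) = 1 := rfl
  have i11 : ((1 : ZMod 3) + 1) = 2 := rfl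
  have i21 : ((2 : ZMod 3) + 1) = 0 := rfl
  have j0 : ((0 : ZMod 3) - 1) = 2 := rfl
  have j1 : ((1 : ZMod 3) - 1) = 0 := rfl
  have j2 : ((2 : ZMod 3) - 1) = 1 := rfl
  have t0 : tri v 0 = p₁ := rfl
  have t1 : tri v 1 = v := rfl
  have t2 : tri v 2 = p₂ := rfl
  have k0 : triTan h 0 = 0 := rfl
  have k1 : triTan h 1 = h := rfl
  have k2 : triTan h 2 = 0 := rfl
  have e0 : edge (tri v) 0 = v - p₁ := by rw [edge, i01, t1, t0]
  have e1 : edge (tri v) 1 = p₂ - v := by rw [edge, i11, t2, t1]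
  have e2 : edge (tri v) 2 = p₁ - p₂ := by rw [edge, i21, t0, t2]
  have ha : ‖v - p₁‖ ≠ 0 := by
    simpa [sub_eq_zero] using hv₁
  have hb : ‖p₂ - v‖ ≠ 0 := by
    simp [sub_eq_zero]
    exact fun hh => hv₂ hh.symm
  have hl : len (tri v) = ‖v - p₁‖ + ‖p₂ - v‖ + 2 := by
    rw [len, sum_zmod3, e0, e1, e2, norm_p₁_sub_p₂]
  have hl0 : len (tri v) ≠ 0 := by
    rw [hl]; positivity
  have D0 : Ds (tri v) (triTan h) 1 0 = (‖v - p₁‖)⁻¹ • h := by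
    simp [Ds, i01, k0, k1, e0]
  have D1 : Ds (tri v) (triTan h) 1 1 = (‖p₂ - v‖)⁻¹ • (-h) := by
    simp [Ds, i11, k1, k2, e1]
  have D2 : Ds (tri v) (triTan h) 1 2 = 0 := by
    simp [Ds, i21, k0, k2]
  rw [gMet, sum_zmod3]
  simp only [D0, D1, D2, k0, k1, k2, j0, j1, j2, e0, e1, e2, mu, norm_p₁_sub_p₂,
    Nat.cast_one, if_true, inner_zero_left, inner_zero_right, zero_div, zero_mul,
    zero_add, add_zero, real_inner_self_eq_norm_sq, hl, norm_smul, norm_neg,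
    norm_inv, norm_norm, mul_pow]
  norm_num [zpow_one]
  field_simp
  ring
end
end
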